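/- arXiv:1302.3738 — 4 statements merged into one kernel-verified Lean document; each statement's English description precedes it below -/
import Mathlib

section
/- For each positive real number α there exists a unique positive real number c_α such that ∫₀^∞ t e^{-t}/(c_α + t)² dt = 1/α. Moreover α ↦ c_α is increasing, lim_{α→0} c_α = 0, and lim_{α→∞} c_α = ∞. -/
open MeasureTheory Set Filter


open Real in
noncomputable def Faux (c : ℝ) : ℝ := ∫ t in Set.Ioi (0:ℝ), t * Real.exp (-t) / (c + t)^2

lemma te_integrable : IntegrableOn (fun t : ℝ => t * Real.exp (-t)) (Set.Ioi 0) := by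
  have h := Real.GammaIntegral_convergent (s := 2) (by norm_num)
  apply h.congr_fun ?_ measurableSet_Ioi
  intro t ht
  simp only [mem_Ioi] at ht
  simp only [show (2:ℝ) - 1 = 1 by norm_num, Real.rpow_one]
  ring

lemma Faux_meas {c : ℝ} (hc : 0 < c) :
    AEStronglyMeasurable (fun t : ℝ => t * Real.exp (-t) / (c + t)^2)
      (volume.restrict (Set.Ioi 0)) := by
  apply ContinuousOn.aestronglyMeasurable ?_ measurableSet_Ioi
  apply ContinuousOn.div (by fun_prop) (by fun_prop)
  intro t ht
  simp only [mem_Ioi] at ht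
  positivity

lemma Faux_integrable {c : ℝ} (hc : 0 < c) :
    IntegrableOn (fun t : ℝ => t * Real.exp (-t) / (c + t)^2) (Set.Ioi 0) := by
  apply Integrable.mono (te_integrable.div_const (c^2)) (Faux_meas hc)
  filter_upwards [ae_restrict_mem measurableSet_Ioi] with t ht
  simp only [mem_Ioi] at ht
  have h1 : 0 < t * Real.exp (-t) := by positivity
  have h2 : c^2 ≤ (c+t)^2 := by nlinarith
  rw [Real.norm_eq_abs, Real.norm_eq_abs, abs_of_nonneg (by positivity),
    abs_of_nonneg (by positivity)]
  apply div_le_div_of_nonneg_left h1.le (by positivity) h2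

lemma nonneg_ae {c : ℝ} : 0 ≤ᵐ[volume.restrict (Set.Ioi (0:ℝ))]
    (fun t : ℝ => t * Real.exp (-t) / (c + t)^2) := by
  filter_upwards [ae_restrict_mem measurableSet_Ioi] with t ht
  simp only [mem_Ioi] at ht
  positivity

lemma Faux_pos {c : ℝ} (hc : 0 < c) : 0 < Faux c := by
  rw [Faux, setIntegral_pos_iff_support_of_nonneg_ae nonneg_ae (Faux_integrable hc)]
  have : Set.Ioi (0:ℝ) ⊆ Function.support (fun t : ℝ => t * Real.exp (-t) / (c + t)^2) ∩ Set.Ioi 0 := by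
    intro t ht
    simp only [mem_Ioi] at ht
    refine ⟨?_, ht⟩
    simp only [Function.mem_support]
    positivity
  calc (0:ENNReal) < volume (Set.Ioi (0:ℝ)) := by simp
    _ ≤ _ := measure_mono this

lemma Faux_strictAnti {a b : ℝ} (ha : 0 < a) (hab : a < b) : Faux b < Faux a := by
  have hb : 0 < b := ha.trans hab
  have h : 0 < Faux a - Faux b := by
    rw [Faux, Faux, ← integral_sub (Faux_integrable ha) (Faux_integrable hb)]
    rw [setIntegral_pos_iff_support_of_nonneg_ae]
    · have : Set.Ioi (0:ℝ) ⊆ Function.support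
          (fun t : ℝ => t * Real.exp (-t) / (a + t)^2 - t * Real.exp (-t) / (b + t)^2)
          ∩ Set.Ioi 0 := by
        intro t ht
        simp only [mem_Ioi] at ht
        refine ⟨?_, ht⟩
        simp only [Function.mem_support]
        have h1 : 0 < t * Real.exp (-t) := by positivity
        have h2 : (a+t)^2 < (b+t)^2 := by nlinarith
        have : t * Real.exp (-t) / (b + t)^2 < t * Real.exp (-t) / (a + t)^2 :=
          div_lt_div_of_pos_left h1 (by positivity) h2
        intro hcon
        nlinarith
      calc (0:ENNReal) < volume (Set.Ioi (0:ℝ)) := by simp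
        _ ≤ _ := measure_mono this
    · filter_upwards [ae_restrict_mem measurableSet_Ioi] with t ht
      simp only [mem_Ioi] at ht
      have h1 : 0 < t * Real.exp (-t) := by positivity
      have h2 : (a+t)^2 ≤ (b+t)^2 := by nlinarith
      have := div_le_div_of_nonneg_left h1.le (by positivity : (0:ℝ) < (a+t)^2) h2
      simpa using this
    · exact (Faux_integrable ha).sub (Faux_integrable hb)
  linarith


lemma Faux_continuousAt {c0 : ℝ} (h : 0 < c0) : ContinuousAt Faux c0 := by
  have h2 : 0 < c0/2 := half_pos h
  apply continuousAt_of_dominated (bound := fun t => t * Real.exp (-t) / (c0/2 + t)^2)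
  · filter_upwards [eventually_gt_nhds (half_lt_self h)] with c hc
    exact Faux_meas (h2.trans hc)
  · filter_upwards [eventually_gt_nhds (half_lt_self h)] with c hc
    filter_upwards [ae_restrict_mem measurableSet_Ioi] with t ht
    simp only [mem_Ioi] at ht
    have h1 : 0 < t * Real.exp (-t) := by positivity
    have hle : (c0/2+t)^2 ≤ (c+t)^2 := by nlinarith
    rw [Real.norm_eq_abs, abs_of_nonneg (by positivity)]
    exact div_le_div_of_nonneg_left h1.le (by positivity) hle
  · exact Faux_integrable h2
  · filter_upwards [ae_restrict_mem measurableSet_Ioi] with t ht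
    simp only [mem_Ioi] at ht
    apply ContinuousAt.div continuousAt_const (by fun_prop)
    positivity

lemma Faux_tendsto_zero : Tendsto Faux atTop (nhds 0) := by
  have hK := te_integrable
  apply squeeze_zero' (f := Faux) (g := fun c => (∫ t in Set.Ioi (0:ℝ), t * Real.exp (-t)) / c^2)
  · filter_upwards [eventually_gt_atTop 0] with c hc
    exact (Faux_pos hc).le
  · filter_upwards [eventually_gt_atTop 0] with c hc
    rw [Faux, div_eq_mul_inv, ← integral_mul_const]
    apply setIntegral_mono_on (Faux_integrable hc) (hK.mul_const _) measurableSet_Ioi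
    intro t ht
    simp only [mem_Ioi] at ht
    rw [div_eq_mul_inv]
    have h1 : 0 ≤ t * Real.exp (-t) := by positivity
    have hle : c^2 ≤ (c+t)^2 := by nlinarith
    exact mul_le_mul_of_nonneg_left (by
      apply inv_anti₀ (by positivity) hle) h1
  · apply Tendsto.div_atTop tendsto_const_nhds
    exact tendsto_pow_atTop (by norm_num)

lemma Faux_lower {c : ℝ} (hc : 0 < c) (hc1 : c < 1) :
    Real.exp (-1) / 4 * Real.log (1/c) ≤ Faux c := by
  have h1 : IntegrableOn (fun t : ℝ => Real.exp (-1) / 4 * (1/t)) (Set.Ioc c 1) := by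
    apply (ContinuousOn.integrableOn_Icc ?_).mono_set Ioc_subset_Icc_self
    apply ContinuousOn.mul continuousOn_const
    apply ContinuousOn.div continuousOn_const continuousOn_id
    intro t ht
    have : 0 < t := lt_of_lt_of_le hc ht.1
    simpa using this.ne'
  have hsub : Set.Ioc c 1 ⊆ Set.Ioi (0:ℝ) := fun t ht => lt_trans hc ht.1
  have key : (∫ t in Set.Ioc c 1, Real.exp (-1) / 4 * (1/t)) ≤
      (∫ t in Set.Ioc c 1, t * Real.exp (-t) / (c + t)^2) := by
    apply setIntegral_mono_on h1 ((Faux_integrable hc).mono_set hsub) measurableSet_Ioc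
    intro t ht
    have htc : c < t := ht.1
    have ht1 : t ≤ 1 := ht.2
    have ht0 : 0 < t := lt_trans hc htc
    have he : Real.exp (-1) ≤ Real.exp (-t) := Real.exp_le_exp.2 (by linarith)
    have hden : (c + t)^2 ≤ 4 * t^2 := by nlinarith
    calc Real.exp (-1) / 4 * (1/t) ≤ Real.exp (-t) / 4 * (1/t) := by
          apply mul_le_mul_of_nonneg_right (by linarith) (by positivity)
      _ = t * Real.exp (-t) / (4 * t^2) := by field_simp
      _ ≤ t * Real.exp (-t) / (c+t)^2 :=
          div_le_div_of_nonneg_left (by positivity) (by positivity) hden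
  have hval : (∫ t in Set.Ioc c 1, Real.exp (-1) / 4 * (1/t))
      = Real.exp (-1) / 4 * Real.log (1/c) := by
    rw [← intervalIntegral.integral_of_le hc1.le, intervalIntegral.integral_const_mul,
      integral_one_div (by
        intro hmem
        rw [Set.uIcc_of_le hc1.le] at hmem
        exact absurd hmem.1 (not_le.2 hc)), one_div]
  have hmono : (∫ t in Set.Ioc c 1, t * Real.exp (-t) / (c + t)^2) ≤ Faux c := by
    apply setIntegral_mono_set (Faux_integrable hc)
    · filter_upwards [ae_restrict_mem measurableSet_Ioi] with t ht
      simp only [mem_Ioi] at ht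
      positivity
    · exact HasSubset.Subset.eventuallyLE hsub
  linarith [hval ▸ key]


lemma Faux_tendsto_top : Tendsto Faux (nhdsWithin 0 (Set.Ioi 0)) atTop := by
  apply tendsto_atTop_mono' _ (f₁ := fun c => Real.exp (-1) / 4 * Real.log (1/c))
  · filter_upwards [self_mem_nhdsWithin,
      eventually_nhdsWithin_of_eventually_nhds (eventually_lt_nhds one_pos)] with c hc hc1
    exact Faux_lower hc hc1
  · apply Tendsto.const_mul_atTop (by positivity)
    simp only [one_div]
    have := Real.tendsto_log_nhdsGT_zero
    have h2 : Tendsto (fun c : ℝ => -Real.log c) (nhdsWithin 0 (Set.Ioi 0)) atTop :=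
      tendsto_neg_atBot_atTop.comp this
    apply h2.congr
    intro c
    rw [Real.log_inv]

lemma Faux_exists {y : ℝ} (hy : 0 < y) : ∃ c : ℝ, 0 < c ∧ Faux c = y := by
  obtain ⟨b, hb⟩ := (Faux_tendsto_zero.eventually (eventually_lt_nhds hy)).exists_forall_of_atTop
  obtain ⟨a, ha⟩ : ∃ a, (y < Faux a ∧ a ∈ Set.Ioi 0) ∧ a < max b 1 := by
    have h1 := Faux_tendsto_top.eventually (eventually_gt_atTop y)
    have h2 : ∀ᶠ c in nhdsWithin 0 (Set.Ioi 0), c < max b 1 :=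
      eventually_nhdsWithin_of_eventually_nhds
        (eventually_lt_nhds (lt_of_lt_of_le one_pos (le_max_right b 1)))
    exact ((h1.and self_mem_nhdsWithin).and h2).exists
  obtain ⟨⟨hya, ha0⟩, hab⟩ := ha
  simp only [mem_Ioi] at ha0
  set B := max b 1 with hB
  have hFb : Faux B < y := hb B (le_max_left b 1)
  have hcont : ContinuousOn Faux (Set.Icc a B) := by
    intro x hx
    exact (Faux_continuousAt (lt_of_lt_of_le ha0 hx.1)).continuousWithinAt
  have := intermediate_value_Icc' hab.le hcont
  obtain ⟨c, hcmem, hcval⟩ := this ⟨hFb.le, hya.le⟩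
  exact ⟨c, lt_of_lt_of_le ha0 hcmem.1, hcval⟩


/-- For each positive α there is a unique positive c with
∫₀^∞ t e^{-t}/(c+t)² dt = 1/α; moreover α ↦ c_α is increasing, tends to 0
as α → 0 and to ∞ as α → ∞. -/
theorem free_gamma_c_alpha_exists_unique :
    (∀ α : ℝ, 0 < α → ∃! c : ℝ, 0 < c ∧
      (∫ t in Set.Ioi (0:ℝ), t * Real.exp (-t) / (c + t)^2) = 1/α) ∧
    (∀ c : ℝ → ℝ,
      (∀ α : ℝ, 0 < α → 0 < c α ∧
        (∫ t in Set.Ioi (0:ℝ), t * Real.exp (-t) / (c α + t)^2) = 1/α) →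
      (∀ α β : ℝ, 0 < α → α < β → c α < c β) ∧
      Filter.Tendsto c (nhdsWithin 0 (Set.Ioi 0)) (nhds 0) ∧
      Filter.Tendsto c Filter.atTop Filter.atTop) := by
  have anti : ∀ a b : ℝ, 0 < a → 0 < b → Faux b ≤ Faux a → a ≤ b := by
    intro a b ha hb h
    by_contra hcon
    push_neg at hcon
    exact absurd h (not_le.2 (Faux_strictAnti hb hcon))
  constructor
  · intro α hα
    obtain ⟨c, hc0, hcv⟩ := Faux_exists (y := 1/α) (by positivity)
    refine ⟨c, ⟨hc0, hcv⟩, ?_⟩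
    rintro c' ⟨hc'0, hc'v⟩
    have h1 : Faux c' = Faux c := by
      unfold Faux
      rw [hc'v]
      exact hcv.symm
    exact le_antisymm (anti c' c hc'0 hc0 h1.ge) (anti c c' hc0 hc'0 h1.le)
  · intro c hc
    have hcF : ∀ α : ℝ, 0 < α → Faux (c α) = 1/α := fun α hα => (hc α hα).2
    have hmono : ∀ α β : ℝ, 0 < α → α < β → c α < c β := by
      intro α β hα hαβ
      have hβ : 0 < β := hα.trans hαβ
      by_contra hcon
      push_neg at hcon
      have h1 : Faux (c α) ≤ Faux (c β) := by
        rcases eq_or_lt_of_le hcon with h | h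
        · rw [h]
        · exact (Faux_strictAnti (hc β hβ).1 h).le
      rw [hcF α hα, hcF β hβ] at h1
      have : 1/β < 1/α := by
        apply div_lt_div_of_pos_left one_pos hα hαβ
      linarith
    refine ⟨hmono, ?_, ?_⟩
    · -- c α → 0 as α → 0⁺
      rw [tendsto_order]
      constructor
      · intro x hx
        filter_upwards [self_mem_nhdsWithin] with α hα
        exact hx.trans (hc α hα).1
      · intro ε hε
        have hFε : 0 < Faux ε := Faux_pos hε
        have : ∀ᶠ α in nhdsWithin 0 (Set.Ioi 0), α < 1 / (Faux ε + 1) :=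
          eventually_nhdsWithin_of_eventually_nhds (eventually_lt_nhds (by positivity))
        filter_upwards [this, self_mem_nhdsWithin] with α hα1 hα0
        simp only [mem_Ioi] at hα0
        by_contra hcon
        push_neg at hcon
        have h1 : Faux (c α) ≤ Faux ε := by
          rcases eq_or_lt_of_le hcon with h | h
          · rw [← h]
          · exact (Faux_strictAnti hε h).le
        rw [hcF α hα0] at h1
        have h2 : Faux ε + 1 < 1/α := by
          have hmul : α * (Faux ε + 1) < 1 := (lt_div_iff₀ (by positivity)).1 hα1
          rw [lt_div_iff₀ hα0]
          nlinarith
        linarith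
    · -- c α → ∞
      rw [tendsto_atTop]
      intro M
      set M' := max M 1 with hM'
      have hM'0 : 0 < M' := lt_of_lt_of_le one_pos (le_max_right M 1)
      have hFM : 0 < Faux M' := Faux_pos hM'0
      filter_upwards [eventually_gt_atTop (1 / Faux M')] with α hα
      have hα0 : 0 < α := lt_trans (by positivity) hα
      have h1 : 1/α < Faux M' := by
        rw [div_lt_iff₀ hα0]
        have := (div_lt_iff₀ hFM).1 hα
        nlinarith
      have h2 : Faux (c α) < Faux M' := by rw [hcF α hα0]; exact h1
      have h3 : M' < c α := by
        by_contra hcon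
        push_neg at hcon
        have : Faux M' ≤ Faux (c α) := by
          rcases eq_or_lt_of_le hcon with h | h
          · rw [h]
          · exact (Faux_strictAnti (hc α hα0).1 h).le
        linarith
      exact (le_max_left M 1).trans h3.le
end

section
/- Let α > 0. Define v_α : ℝ → [0,∞) by v_α(x) = 0 for x ≤ -c_α, and for x > -c_α let v_α(x) be the unique y > 0 with F(x + iy) = 1/α. Then {z ∈ ℂ⁺ : H_α(z) ∈ ℂ⁺} = {x + iy : x, y ∈ ℝ, y > v_α(x)}, where ℂ⁺ denotes the open upper half-plane. -/
/-!
For `z = x + iy` with `y ≠ 0`, taking imaginary parts under the integral gives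
`Im H_α(z) = y (1 - α F(x + iy))`, so for `y > 0` the point `H_α(z)` lies in `ℂ⁺` exactly when
`F(x + iy) < 1/α`. For `x > -c_α` this holds iff `y > v_α(x)`, because `y ↦ F(x + iy)` is strictly
decreasing and equals `1/α` at `v_α(x)`. For `x ≤ -c_α` it holds for every `y > 0`, because
`(x - t)² + y² > (c_α + t)²` for `t > 0`, whence `F(x + iy) < ∫ t e^{-t}/(c_α + t)² = 1/α`.
-/

open MeasureTheory Set Filter

/-- `F(x+iy) = ∫₀^∞ t e^{-t}/((x-t)² + y²) dt`. -/
noncomputable def Fint (x y : ℝ) : ℝ :=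
  ∫ t in Set.Ioi (0:ℝ), t * Real.exp (-t) / ((x - t)^2 + y^2)

/-- `H_α(z) = z + α + α ∫₀^∞ t e^{-t}/(z-t) dt`. -/
noncomputable def Hfun (α : ℝ) (z : ℂ) : ℂ :=
  z + (α : ℂ) + (α : ℂ) * ∫ t in Set.Ioi (0:ℝ), ((t * Real.exp (-t) : ℝ) : ℂ) / (z - (t : ℂ))

section IntegralLemmas

variable {X : Type*} [MeasurableSpace X] {μ : Measure X}

theorem Integrable.div_of_le_norm {𝕜 : Type*} [RCLike 𝕜] {f d : X → 𝕜} {m : ℝ}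
    (hf : Integrable f μ) (hd : AEMeasurable d μ) (hm : 0 < m)
    (hdm : ∀ᵐ x ∂μ, m ≤ ‖d x‖) : Integrable (fun x => f x / d x) μ := by
  simp_rw [div_eq_mul_inv]
  refine hf.mul_bdd (c := m⁻¹) hd.inv.aestronglyMeasurable ?_
  filter_upwards [hdm] with x hx
  rw [norm_inv]
  exact inv_anti₀ hm hx

theorem setIntegral_lt_setIntegral_of_forall_lt {s : Set X} (hs : MeasurableSet s) (hμs : μ s ≠ 0)
    {f g : X → ℝ} (hf : IntegrableOn f s μ) (hg : IntegrableOn g s μ)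
    (hfg : ∀ x ∈ s, f x < g x) : ∫ x in s, f x ∂μ < ∫ x in s, g x ∂μ := by
  rw [← sub_pos, ← integral_sub hg hf, setIntegral_pos_iff_support_of_nonneg_ae
    (ae_restrict_of_forall_mem hs fun x hx => (sub_pos.2 (hfg x hx)).le) (hg.sub hf)]
  have hsupp : Function.support (fun x => g x - f x) ∩ s = s :=
    inter_eq_right.2 fun x hx => (sub_pos.2 (hfg x hx)).ne'
  rw [hsupp]
  exact pos_iff_ne_zero.2 hμs

end IntegralLemmas

theorem integrableOn_mul_exp_neg_Ioi :
    IntegrableOn (fun t : ℝ => t * Real.exp (-t)) (Ioi 0) := by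
  simpa using integrableOn_rpow_mul_exp_neg_rpow (s := 1) (p := 1) (by norm_num) one_pos

theorem integrableOn_mul_exp_neg_div {d : ℝ → ℝ} (hd : Measurable d) {m : ℝ} (hm : 0 < m)
    (hdm : ∀ t ∈ Ioi (0 : ℝ), m ≤ d t) :
    IntegrableOn (fun t : ℝ => t * Real.exp (-t) / d t) (Ioi 0) :=
  Integrable.div_of_le_norm integrableOn_mul_exp_neg_Ioi hd.aemeasurable hm <|
    ae_restrict_of_forall_mem measurableSet_Ioi fun t ht =>
      (hdm t ht).trans (Real.le_norm_self _)

theorem integrableOn_Fint_integrand (x : ℝ) {y : ℝ} (hy : y ≠ 0) :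
    IntegrableOn (fun t : ℝ => t * Real.exp (-t) / ((x - t) ^ 2 + y ^ 2)) (Ioi 0) :=
  integrableOn_mul_exp_neg_div (by fun_prop) (pow_pos (abs_pos.2 hy) 2 |>.trans_eq (sq_abs y))
    fun t _ => le_add_of_nonneg_left (sq_nonneg _)

theorem integrableOn_Hfun_integrand {z : ℂ} (hz : z.im ≠ 0) :
    IntegrableOn (fun t : ℝ => ((t * Real.exp (-t) : ℝ) : ℂ) / (z - (t : ℂ))) (Ioi 0) :=
  Integrable.div_of_le_norm integrableOn_mul_exp_neg_Ioi.ofReal (by fun_prop) (abs_pos.2 hz) <|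
    Eventually.of_forall fun t => by
      simpa using Complex.abs_im_le_norm (z - (t : ℂ))

theorem Hfun_im (α : ℝ) {z : ℂ} (hz : z.im ≠ 0) :
    (Hfun α z).im = z.im * (1 - α * Fint z.re z.im) := by
  have integrand_im : ∀ t : ℝ, (((t * Real.exp (-t) : ℝ) : ℂ) / (z - (t : ℂ))).im
      = -z.im * (t * Real.exp (-t) / ((z.re - t) ^ 2 + z.im ^ 2)) := by
    intro t
    simp only [Complex.div_im, Complex.ofReal_im, Complex.ofReal_re, Complex.sub_im,
      Complex.sub_re, Complex.normSq_apply]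
    ring
  have integral_im_eq :
      (∫ t in Ioi (0 : ℝ), ((t * Real.exp (-t) : ℝ) : ℂ) / (z - (t : ℂ))).im
        = -z.im * Fint z.re z.im := by
    refine (integral_im (integrableOn_Hfun_integrand hz)).symm.trans ?_
    simp only [RCLike.im_to_complex, integrand_im, integral_const_mul, Fint]
  simp only [Hfun, Complex.add_im, Complex.mul_im, Complex.ofReal_im, Complex.ofReal_re,
    integral_im_eq]
  ring

theorem Hfun_im_pos_iff {α : ℝ} (hα : 0 < α) {z : ℂ} (hz : 0 < z.im) :
    0 < (Hfun α z).im ↔ Fint z.re z.im < 1 / α := by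
  rw [Hfun_im α hz.ne', mul_pos_iff_of_pos_left hz, sub_pos, lt_div_iff₀ hα, mul_comm]

theorem Fint_strictAntiOn (x : ℝ) : StrictAntiOn (Fint x) (Ioi 0) := by
  intro y₁ (hy₁ : 0 < y₁) y₂ (hy₂ : 0 < y₂) hy
  refine setIntegral_lt_setIntegral_of_forall_lt measurableSet_Ioi (by simp)
    (integrableOn_Fint_integrand x hy₂.ne') (integrableOn_Fint_integrand x hy₁.ne')
    fun t ht => div_lt_div_of_pos_left (mul_pos ht (Real.exp_pos _)) (by positivity) ?_
  nlinarith

theorem Fint_lt_of_le_neg {c x y : ℝ} (hc : 0 < c) (hx : x ≤ -c) (hy : 0 < y) :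
    Fint x y < ∫ t in Ioi (0 : ℝ), t * Real.exp (-t) / (c + t) ^ 2 := by
  refine setIntegral_lt_setIntegral_of_forall_lt measurableSet_Ioi (by simp)
    (integrableOn_Fint_integrand x hy.ne')
    (integrableOn_mul_exp_neg_div (by fun_prop) (pow_pos hc 2) fun t (ht : 0 < t) => ?_)
    fun t (ht : 0 < t) => div_lt_div_of_pos_left (mul_pos ht (Real.exp_pos _)) (by positivity) ?_
  all_goals nlinarith

theorem free_gamma_upper_half_plane_description_general
    (α : ℝ) (hα : 0 < α) (c : ℝ) (hc : 0 < c)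
    (hceq : (∫ t in Set.Ioi (0:ℝ), t * Real.exp (-t) / (c + t)^2) = 1/α)
    (v : ℝ → ℝ) (hv0 : ∀ x ≤ -c, v x = 0)
    (hvpos : ∀ x, -c < x → 0 < v x)
    (hveq : ∀ x, -c < x → Fint x (v x) = 1/α) :
    {z : ℂ | 0 < z.im ∧ 0 < (Hfun α z).im} = {z : ℂ | v z.re < z.im} := by
  ext z
  simp only [mem_ofPred_eq]
  rcases le_or_gt z.re (-c) with hx | hx
  · rw [hv0 _ hx]
    exact ⟨And.left, fun hy =>
      ⟨hy, (Hfun_im_pos_iff hα hy).2 (hceq ▸ Fint_lt_of_le_neg hc hx hy)⟩⟩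
  · have hv : v z.re ∈ Ioi 0 := hvpos _ hx
    have below_v_iff : ∀ {y}, y ∈ Ioi (0 : ℝ) → (Fint z.re y < 1 / α ↔ v z.re < y) :=
      fun hy => hveq _ hx ▸ (Fint_strictAntiOn z.re).lt_iff_gt hy hv
    constructor
    · rintro ⟨hy, hH⟩
      exact (below_v_iff hy).1 ((Hfun_im_pos_iff hα hy).1 hH)
    · intro hvy
      have hy : 0 < z.im := hv.out.trans hvy
      exact ⟨hy, (Hfun_im_pos_iff hα hy).2 ((below_v_iff hy).2 hvy)⟩

/-- `{z ∈ ℂ⁺ : H_α(z) ∈ ℂ⁺} = {x+iy : y > v_α(x)}`. -/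
theorem free_gamma_upper_half_plane_description
    (α : ℝ) (hα : 0 < α) (c : ℝ) (hc : 0 < c)
    (hceq : (∫ t in Set.Ioi (0:ℝ), t * Real.exp (-t) / (c + t)^2) = 1/α)
    (v : ℝ → ℝ) (hv0 : ∀ x ≤ -c, v x = 0)
    (hvpos : ∀ x, -c < x → 0 < v x)
    (hveq : ∀ x, -c < x → Fint x (v x) = 1/α)
    (hvuniq : ∀ x, -c < x → ∀ y, 0 < y → Fint x y = 1/α → y = v x) :
    {z : ℂ | 0 < z.im ∧ 0 < (Hfun α z).im} = {z : ℂ | v z.re < z.im} :=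
  free_gamma_upper_half_plane_description_general α hα c hc hceq v hv0 hvpos hveq
end

section
/- For any positive numbers δ and γ there exists α₀ > 0 such that for all α ∈ (0, α₀], sup_{x ∈ [δ,∞)} | v_α(x)/α − π x e^{-x} | ≤ γ. -/
open MeasureTheory Set Filter

noncomputable def gfun (t : ℝ) : ℝ := if 0 ≤ t then t * Real.exp (-t) else 0

lemma gfun_nonneg (t : ℝ) : 0 ≤ gfun t := by
  unfold gfun; split
  · positivity
  · exact le_rfl

lemma texp_le_one {t : ℝ} (ht : 0 ≤ t) : t * Real.exp (-t) ≤ 1 := by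
  have h1 : t ≤ Real.exp t := (by linarith [Real.add_one_le_exp t])
  calc t * Real.exp (-t) ≤ Real.exp t * Real.exp (-t) :=
        mul_le_mul_of_nonneg_right h1 (Real.exp_nonneg _)
    _ = 1 := by rw [← Real.exp_add]; simp

lemma gfun_le_one (t : ℝ) : gfun t ≤ 1 := by
  unfold gfun; split
  · exact texp_le_one ‹_›
  · norm_num

lemma gfun_measurable : Measurable gfun := by
  unfold gfun
  exact Measurable.ite measurableSet_Ici (by fun_prop) measurable_const

lemma texp_lip {a b : ℝ} (ha : 0 ≤ a) (hb : 0 ≤ b) :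
    |a * Real.exp (-a) - b * Real.exp (-b)| ≤ |a - b| := by
  have key := Convex.norm_image_sub_le_of_norm_hasDerivWithin_le
    (f := fun t : ℝ => t * Real.exp (-t)) (f' := fun t : ℝ => (1 - t) * Real.exp (-t))
    (s := Ici (0:ℝ)) (C := 1) ?_ ?_ (convex_Ici 0) hb ha
  · simpa [Real.norm_eq_abs, one_mul] using key
  · intro x _
    have h1 : HasDerivAt (fun t : ℝ => t * Real.exp (-t)) (1 * Real.exp (-x) + x * (Real.exp (-x) * (-1))) x := by
      exact (hasDerivAt_id x).mul ((Real.hasDerivAt_exp (-x)).comp x ((hasDerivAt_id x).neg))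
    have : (1 : ℝ) * Real.exp (-x) + x * (Real.exp (-x) * (-1)) = (1 - x) * Real.exp (-x) := by ring
    exact (this ▸ h1).hasDerivWithinAt
  · intro x hx
    simp only [Real.norm_eq_abs, abs_mul, Real.abs_exp]
    rcases le_total x 1 with h | h
    · have : |1 - x| = 1 - x := abs_of_nonneg (by linarith)
      rw [this]
      have hx0 : (0:ℝ) ≤ x := hx
      have he : Real.exp (-x) ≤ 1 := Real.exp_le_one_iff.mpr (by linarith)
      have he0 : 0 < Real.exp (-x) := Real.exp_pos _
      nlinarith
    · have : |1 - x| = x - 1 := by rw [abs_of_nonpos (by linarith)]; ring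
      rw [this]
      have h2 : (x - 1) * Real.exp (-x) ≤ x * Real.exp (-x) := by
        have := Real.exp_pos (-x); nlinarith
      linarith [texp_le_one (le_trans zero_le_one h)]

lemma gfun_lip (a b : ℝ) : |gfun a - gfun b| ≤ |a - b| := by
  unfold gfun
  rcases le_or_gt 0 a with ha | ha <;> rcases le_or_gt 0 b with hb | hb
  · rw [if_pos ha, if_pos hb]; exact texp_lip ha hb
  · rw [if_pos ha, if_neg (not_le.mpr hb), sub_zero]
    rw [abs_of_nonneg (by positivity)]
    have h1 : a * Real.exp (-a) ≤ a := by
      nlinarith [Real.exp_le_one_iff.mpr (by simpa using ha : -a ≤ 0), Real.exp_pos (-a)]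
    have : |a - b| = a - b := abs_of_nonneg (by linarith)
    linarith
  · rw [if_neg (not_le.mpr ha), if_pos hb, zero_sub, abs_neg]
    rw [abs_of_nonneg (by positivity)]
    have h1 : b * Real.exp (-b) ≤ b := by
      nlinarith [Real.exp_le_one_iff.mpr (by simpa using hb : -b ≤ 0), Real.exp_pos (-b)]
    have : |a - b| = b - a := by rw [abs_of_nonpos (by linarith)]; ring
    linarith
  · rw [if_neg (not_le.mpr ha), if_neg (not_le.mpr hb)]; simp


lemma int_texp : IntegrableOn (fun t => t * Real.exp (-t)) (Ioi (0:ℝ)) := by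
  have h := Real.GammaIntegral_convergent (by norm_num : (0:ℝ) < 2)
  apply h.congr_fun ?_ measurableSet_Ioi
  intro x hx
  show Real.exp (-x) * x ^ ((2:ℝ) - 1) = x * Real.exp (-x)
  norm_num [Real.rpow_one, mul_comm]

lemma Fint_integrand_integrable (x : ℝ) {y : ℝ} (hy : 0 < y) :
    IntegrableOn (fun t => t * Real.exp (-t) / ((x - t)^2 + y^2)) (Ioi 0) := by
  have hmaj : IntegrableOn (fun t => t * Real.exp (-t) * (y^2)⁻¹) (Ioi (0:ℝ)) :=
    int_texp.mul_const _
  apply Integrable.mono' hmaj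
  · apply Continuous.aestronglyMeasurable
    apply Continuous.div (by fun_prop) (by fun_prop)
    intro t
    positivity
  · filter_upwards [ae_restrict_mem measurableSet_Ioi] with t ht
    have ht0 : (0:ℝ) < t := ht
    have hnum : 0 ≤ t * Real.exp (-t) := by positivity
    have hden : (0:ℝ) < y^2 := by positivity
    have hden2 : y^2 ≤ (x - t)^2 + y^2 := by nlinarith [sq_nonneg (x - t)]
    rw [Real.norm_eq_abs, abs_of_nonneg (by positivity)]
    rw [div_eq_mul_inv]
    exact mul_le_mul_of_nonneg_left (by apply inv_anti₀ hden hden2) hnum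

lemma poisson_eq {y : ℝ} (hy : 0 < y) (s : ℝ) :
    y / (s^2 + y^2) = y⁻¹ * (1 + (s/y)^2)⁻¹ := by
  have h1 : s^2 + y^2 > 0 := by positivity
  field_simp
  ring

lemma poisson_integrable {y : ℝ} (hy : 0 < y) : Integrable (fun s : ℝ => y / (s^2 + y^2)) := by
  have h : Integrable (fun s : ℝ => y⁻¹ * (1 + (s/y)^2)⁻¹) :=
    (integrable_inv_one_add_sq.comp_div hy.ne').const_mul _
  exact h.congr (by filter_upwards with s; rw [poisson_eq hy])

lemma poisson_integral {y : ℝ} (hy : 0 < y) : ∫ s : ℝ, y / (s^2 + y^2) = Real.pi := by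
  have h1 : ∀ s : ℝ, y / (s^2 + y^2) = y⁻¹ * (1 + (s/y)^2)⁻¹ := poisson_eq hy
  simp_rw [h1]
  rw [integral_const_mul]
  rw [MeasureTheory.Measure.integral_comp_div (fun u : ℝ => (1 + u^2)⁻¹) y]
  rw [integral_univ_inv_one_add_sq, abs_of_pos hy, smul_eq_mul]
  field_simp

lemma tail_rpow_integrable {r : ℝ} (hr : 0 < r) :
    IntegrableOn (fun s : ℝ => s ^ (-2:ℝ)) (Ioi r) :=
  integrableOn_Ioi_rpow_of_lt (by norm_num) hr

lemma tail_rpow_integral {r : ℝ} (hr : 0 < r) :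
    ∫ s in Ioi r, s ^ (-2:ℝ) = r⁻¹ := by
  rw [integral_Ioi_rpow_of_lt (by norm_num) hr]
  norm_num
  rw [Real.rpow_neg_one]

lemma poisson_le_tail {y r : ℝ} (hy : 0 < y) {s : ℝ} (hs : 0 < s) :
    y / (s^2 + y^2) ≤ y * s ^ (-2:ℝ) := by
  rw [show (-2:ℝ) = -(2:ℕ) by norm_num, Real.rpow_neg hs.le, Real.rpow_natCast]
  rw [div_eq_mul_inv]
  apply mul_le_mul_of_nonneg_left _ hy.le
  apply inv_anti₀ (by positivity)
  nlinarith [sq_nonneg y]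

lemma gfun_nonpos {t : ℝ} (ht : t ≤ 0) : gfun t = 0 := by
  unfold gfun
  split
  · have : t = 0 := le_antisymm ht ‹_›
    simp [this]
  · rfl

lemma key (x : ℝ) {y r : ℝ} (hy : 0 < y) (hr : 0 < r) :
    |y * Fint x y - Real.pi * gfun x| ≤ Real.pi * r + 4 * y / r := by
  set P : ℝ → ℝ := fun s => y / (s^2 + y^2) with hP
  have hPpos : ∀ s, 0 < P s := fun s => div_pos hy (by positivity)
  have hPint : Integrable P := poisson_integrable hy
  have hPIv : ∫ s : ℝ, P s = Real.pi := poisson_integral hy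
  have hPcont : Continuous P := continuous_const.div (by fun_prop) (fun s => by positivity)
  have hA : y * Fint x y = ∫ s : ℝ, gfun (x - s) * P s := by
    have e1 : y * Fint x y = ∫ t in Ioi (0:ℝ), gfun t * P (x - t) := by
      rw [Fint, ← integral_const_mul]
      apply setIntegral_congr_fun measurableSet_Ioi
      intro t ht
      have ht0 : (0:ℝ) < t := ht
      show y * (t * Real.exp (-t) / ((x - t)^2 + y^2)) = gfun t * (y / ((x - t)^2 + y^2))
      rw [gfun, if_pos ht0.le]
      ring
    have e2 : ∫ t in Ioi (0:ℝ), gfun t * P (x - t) = ∫ t : ℝ, gfun t * P (x - t) := by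
      rw [← integral_indicator measurableSet_Ioi]
      congr 1; funext t
      rw [indicator_apply]
      split
      · rfl
      · rename_i hn
        have ht : t ≤ 0 := le_of_not_gt (fun hlt => hn hlt)
        rw [gfun_nonpos ht, zero_mul]
    have e3 : ∫ t : ℝ, gfun t * P (x - t) = ∫ s : ℝ, gfun (x - s) * P s := by
      have h := integral_sub_left_eq_self (fun t => gfun t * P (x - t)) volume x
      simp only [sub_sub_cancel] at h
      exact h.symm
    rw [e1, e2, e3]
  have hB : Real.pi * gfun x = ∫ s : ℝ, gfun x * P s := by
    rw [integral_const_mul, hPIv, mul_comm]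
  have hint1 : Integrable (fun s => gfun (x - s) * P s) := by
    apply Integrable.mono' hPint
    · exact ((gfun_measurable.comp (measurable_const.sub measurable_id)).mul
        hPcont.measurable).aestronglyMeasurable
    · filter_upwards with s
      rw [Real.norm_eq_abs, abs_mul, abs_of_pos (hPpos s),
        abs_of_nonneg (gfun_nonneg _)]
      exact mul_le_of_le_one_left (hPpos s).le (gfun_le_one _)
  have hint2 : Integrable (fun s => gfun x * P s) := hPint.const_mul _
  rw [hA, hB, ← integral_sub hint1 hint2]
  set h : ℝ → ℝ := fun s => gfun (x - s) * P s - gfun x * P s with hh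
  have habs : |∫ s : ℝ, h s| ≤ ∫ s : ℝ, |h s| := by
    simpa [Real.norm_eq_abs] using norm_integral_le_integral_norm (μ := volume) h
  refine le_trans habs ?_
  have hint3 : Integrable (fun s => |h s|) := (hint1.sub hint2).abs
  have hbd : ∀ s, |h s| ≤ |s| * P s := by
    intro s
    have e : h s = (gfun (x - s) - gfun x) * P s := by rw [hh]; ring
    rw [e, abs_mul, abs_of_pos (hPpos s)]
    apply mul_le_mul_of_nonneg_right _ (hPpos s).le
    have := gfun_lip (x - s) x
    simpa using this
  have hbd2 : ∀ s, |h s| ≤ 2 * P s := by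
    intro s
    have e : h s = (gfun (x - s) - gfun x) * P s := by rw [hh]; ring
    rw [e, abs_mul, abs_of_pos (hPpos s)]
    apply mul_le_mul_of_nonneg_right _ (hPpos s).le
    have h1 := gfun_nonneg (x - s); have h2 := gfun_le_one (x - s)
    have h3 := gfun_nonneg x; have h4 := gfun_le_one x
    rw [abs_sub_le_iff]; constructor <;> linarith
  rw [← intervalIntegral.integral_Iic_add_Ioi (b := -r) hint3.integrableOn hint3.integrableOn]
  have hsplit2 : ∫ s in Ioi (-r), |h s| = (∫ s in Ioc (-r) r, |h s|) + ∫ s in Ioi r, |h s| := by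
    rw [← setIntegral_union (Ioc_disjoint_Ioi le_rfl) measurableSet_Ioi hint3.integrableOn
      hint3.integrableOn, Ioc_union_Ioi_eq_Ioi (by linarith)]
  rw [hsplit2]
  have tail_int : IntegrableOn (fun s : ℝ => 2 * (y * s ^ (-2:ℝ))) (Ioi r) :=
    ((tail_rpow_integrable hr).const_mul y).const_mul 2
  have tail_val : ∫ s in Ioi r, 2 * (y * s ^ (-2:ℝ)) = 2 * (y / r) := by
    rw [integral_const_mul, integral_const_mul, tail_rpow_integral hr, div_eq_mul_inv]
  have hmid : ∫ s in Ioc (-r) r, |h s| ≤ Real.pi * r := by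
    calc ∫ s in Ioc (-r) r, |h s| ≤ ∫ s in Ioc (-r) r, r * P s := by
          apply setIntegral_mono_on hint3.integrableOn ((hPint.const_mul r).integrableOn)
            measurableSet_Ioc
          intro s hs
          refine le_trans (hbd s) (mul_le_mul_of_nonneg_right ?_ (hPpos s).le)
          exact abs_le.mpr ⟨by linarith [hs.1], hs.2⟩
      _ ≤ ∫ s : ℝ, r * P s := setIntegral_le_integral (hPint.const_mul r)
            (ae_of_all _ fun s => by positivity)
      _ = Real.pi * r := by rw [integral_const_mul, hPIv, mul_comm]
  have hright : ∫ s in Ioi r, |h s| ≤ 2 * (y / r) := by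
    calc ∫ s in Ioi r, |h s| ≤ ∫ s in Ioi r, 2 * (y * s ^ (-2:ℝ)) := by
          apply setIntegral_mono_on hint3.integrableOn tail_int measurableSet_Ioi
          intro s hs
          have hs0 : (0:ℝ) < s := hr.trans hs
          exact le_trans (hbd2 s) (by
            have := poisson_le_tail (r := r) hy hs0
            nlinarith)
      _ = 2 * (y / r) := tail_val
  have hleft : ∫ s in Iic (-r), |h s| ≤ 2 * (y / r) := by
    have hcn : ∫ s in Iic (-r), |h s| = ∫ s in Ioi r, |h (-s)| := by
      have e := integral_comp_neg_Iic (-r) (fun s => |h (-s)|)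
      simp only [neg_neg] at e
      exact e
    rw [hcn]
    have hint4 : IntegrableOn (fun s => |h (-s)|) (Ioi r) := (hint3.comp_neg).integrableOn
    calc ∫ s in Ioi r, |h (-s)| ≤ ∫ s in Ioi r, 2 * (y * s ^ (-2:ℝ)) := by
          apply setIntegral_mono_on hint4 tail_int measurableSet_Ioi
          intro s hs
          have hs0 : (0:ℝ) < s := hr.trans hs
          have hPe : P (-s) = P s := by simp [hP, neg_sq]
          have := hbd2 (-s)
          rw [hPe] at this
          exact le_trans this (by
            have := poisson_le_tail (r := r) hy hs0
            nlinarith)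
      _ = 2 * (y / r) := tail_val
  have : 4 * y / r = 2 * (y / r) + 2 * (y / r) := by ring
  linarith [hmid, hright, hleft]

lemma Fint_strict_anti (x : ℝ) {y1 y2 : ℝ} (h1 : 0 < y1) (h12 : y1 < y2) :
    Fint x y2 < Fint x y1 := by
  have h2 : 0 < y2 := h1.trans h12
  have hi1 := Fint_integrand_integrable x h1
  have hi2 := Fint_integrand_integrable x h2
  rw [← sub_pos]
  unfold Fint
  rw [← integral_sub hi1 hi2]
  have hshow : True := trivial
  set f : ℝ → ℝ := fun t => t * Real.exp (-t) / ((x - t)^2 + y1^2)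
    - t * Real.exp (-t) / ((x - t)^2 + y2^2) with hf
  have hfpos : ∀ t ∈ Ioi (0:ℝ), 0 < f t := by
    intro t ht
    have ht0 : (0:ℝ) < t := ht
    have hd1 : (0:ℝ) < (x - t)^2 + y1^2 := by positivity
    have hd2 : (x - t)^2 + y1^2 < (x - t)^2 + y2^2 := by nlinarith
    have hnum : 0 < t * Real.exp (-t) := by positivity
    rw [hf, sub_pos]
    apply div_lt_div_of_pos_left hnum hd1 hd2
  show 0 < ∫ t in Ioi (0:ℝ), f t
  apply (setIntegral_pos_iff_support_of_nonneg_ae ?_ (hi1.sub hi2)).mpr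
  · have hsub : Ioi (0:ℝ) ⊆ Function.support f := fun t ht => (hfpos t ht).ne'
    have : Function.support f ∩ Ioi 0 = Ioi (0:ℝ) := inter_eq_self_of_subset_right hsub
    have hfe : ((fun t : ℝ => t * Real.exp (-t) / ((x - t) ^ 2 + y1 ^ 2)) - fun t : ℝ =>
        t * Real.exp (-t) / ((x - t) ^ 2 + y2 ^ 2)) = f := rfl
    rw [hfe, this, Real.volume_Ioi]
    exact ENNReal.zero_lt_top
  · rw [EventuallyLE, ae_restrict_iff' measurableSet_Ioi]
    exact ae_of_all _ fun t ht => (hfpos t ht).le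

/-- for any `δ, γ > 0` there is `α₀ > 0` such that for all `α ∈ (0, α₀]`,
`sup_{x ∈ [δ,∞)} |v_α(x)/α − π x e^{-x}| ≤ γ`. -/
theorem free_gamma_v_uniform_small_alpha
    (c : ℝ → ℝ) (v : ℝ → ℝ → ℝ)
    (hc : ∀ α : ℝ, 0 < α → 0 < c α ∧
      (∫ t in Set.Ioi (0:ℝ), t * Real.exp (-t) / (c α + t)^2) = 1/α)
    (hv0 : ∀ α : ℝ, 0 < α → ∀ x ≤ -(c α), v α x = 0)
    (hvpos : ∀ α : ℝ, 0 < α → ∀ x, -(c α) < x → 0 < v α x)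
    (hveq : ∀ α : ℝ, 0 < α → ∀ x, -(c α) < x → Fint x (v α x) = 1/α)
    (hvuniq : ∀ α : ℝ, 0 < α → ∀ x, -(c α) < x →
      ∀ y, 0 < y → Fint x y = 1/α → y = v α x)
    (δ γ : ℝ) (hδ : 0 < δ) (hγ : 0 < γ) :
    ∃ α₀ : ℝ, 0 < α₀ ∧ ∀ α : ℝ, 0 < α → α ≤ α₀ → ∀ x : ℝ, δ ≤ x →
      |v α x / α - Real.pi * x * Real.exp (-x)| ≤ γ := by
  have hπ := Real.pi_pos
  set r : ℝ := γ / (2 * Real.pi) with hrdef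
  have hrpos : 0 < r := by positivity
  set α₀ : ℝ := γ * r / (8 * (Real.pi + γ)) with hα₀def
  refine ⟨α₀, by positivity, ?_⟩
  intro α hα hαα₀ x hx
  have hxpos : 0 < x := hδ.trans_le hx
  have hgx : gfun x = x * Real.exp (-x) := if_pos hxpos.le
  have hcα := (hc α hα).1
  have hxc : -(c α) < x := by linarith
  have hvp := hvpos α hα x hxc
  have hve := hveq α hα x hxc
  set L : ℝ := Real.pi * gfun x with hLdef
  have hL0 : 0 ≤ L := mul_nonneg hπ.le (gfun_nonneg x)
  have hL1 : L ≤ Real.pi := by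
    have := gfun_le_one x
    nlinarith
  have herr : ∀ y : ℝ, 0 < y → y ≤ α * (Real.pi + γ) → |y * Fint x y - L| ≤ γ := by
    intro y hy hyle
    have hk := key x hy hrpos
    have h1 : Real.pi * r = γ / 2 := by
      rw [hrdef]; field_simp
    have h2 : 4 * y / r ≤ γ / 2 := by
      have hy2 : y ≤ α₀ * (Real.pi + γ) := le_trans hyle (by nlinarith)
      have : α₀ * (Real.pi + γ) = γ * r / 8 := by
        rw [hα₀def]; field_simp
      rw [this] at hy2
      rw [div_le_iff₀ hrpos]
      nlinarith
    rw [← hLdef] at hk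
    calc |y * Fint x y - L| ≤ Real.pi * r + 4 * y / r := hk
      _ ≤ γ / 2 + γ / 2 := by rw [h1]; linarith
      _ = γ := by ring
  have hub : v α x ≤ α * (L + γ) := by
    by_contra hcon
    push_neg at hcon
    set y : ℝ := α * (L + γ) with hydef
    have hy : 0 < y := by positivity
    have hyle : y ≤ α * (Real.pi + γ) := by nlinarith
    have h := herr y hy hyle
    have hFlt : Fint x (v α x) < Fint x y := Fint_strict_anti x hy hcon
    have hyF : y * Fint x y ≤ L + γ := by
      have := abs_le.mp h
      linarith
    have hFy : Fint x y ≤ 1/α := by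
      have hq : y * (1/α) = L + γ := by
        rw [hydef]; field_simp
      have : y * Fint x y ≤ y * (1/α) := by rw [hq]; exact hyF
      exact le_of_mul_le_mul_left this hy
    rw [hve] at hFlt
    linarith
  have hlb : α * (L - γ) ≤ v α x := by
    rcases le_or_gt L γ with hLγ | hLγ
    · have : α * (L - γ) ≤ 0 := by nlinarith
      linarith
    · by_contra hcon
      push_neg at hcon
      set y : ℝ := α * (L - γ) with hydef
      have hy : 0 < y := by
        apply mul_pos hα; linarith
      have hyle : y ≤ α * (Real.pi + γ) := by nlinarith
      have h := herr y hy hyle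
      have hFlt : Fint x y < Fint x (v α x) := Fint_strict_anti x hvp hcon
      have hyF : L - γ ≤ y * Fint x y := by
        have := abs_le.mp h
        linarith
      have hFy : 1/α ≤ Fint x y := by
        have hq : y * (1/α) = L - γ := by
          rw [hydef]; field_simp
        have : y * (1/α) ≤ y * Fint x y := by rw [hq]; exact hyF
        exact le_of_mul_le_mul_left this hy
      rw [hve] at hFlt
      linarith
  have hLeq : Real.pi * x * Real.exp (-x) = L := by
    rw [hLdef, hgx]; ring
  rw [hLeq, abs_le]
  have h1 : L - γ ≤ v α x / α := by
    rw [le_div_iff₀ hα]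
    calc (L - γ) * α = α * (L - γ) := by ring
      _ ≤ v α x := hlb
  have h2 : v α x / α ≤ L + γ := by
    rw [div_le_iff₀ hα]
    calc v α x ≤ α * (L + γ) := hub
      _ = (L + γ) * α := by ring
  exact ⟨by linarith, by linarith⟩
end

section
/- Let α > 0. Then s_α = (c_α/(1 + c_α))·(α − c_α), and H_α″(-c_α) = 1 − s_α/c_α² < 0. -/
open MeasureTheory Set Filter

/-! Write `I_k = ∫₀^∞ e^{-t} (c+t)^{-k} dt`. Integration by parts gives `I_k + k I_{k+1} = c^{-k}`,
and splitting `t = (c + t) - c` gives `∫₀^∞ t e^{-t} (c+t)^{-k-1} dt = I_k - c I_{k+1}`.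
Differentiating under the integral sign (legitimate on `Re z < 0`, at distance from the support),
`H_α(-c)` and `H_α″(-c)` become affine in `I_1, I_2, I_3`, while the equation defining `c` reads
`I_1 - c I_2 = 1/α`; these relations determine `s` and `H_α″(-c)`. Finally `H_α″(-c) < 0` amounts
to `α > c² + 2c`, which follows from the Cauchy–Schwarz inequality `I_1² ≤ I_0 I_2 = I_2` for the
probability density `e^{-t}`. -/

open Real

lemma sq_integral_mul_le_integral_mul_sq {X : Type*} [MeasurableSpace X] {μ : Measure X}
    {w g : X → ℝ} (hw : 0 ≤ᵐ[μ] w) (hw_one : ∫ x, w x ∂μ = 1) (hwi : Integrable w μ)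
    (hwg : Integrable (fun x => w x * g x) μ) (hwg2 : Integrable (fun x => w x * g x ^ 2) μ) :
    (∫ x, w x * g x ∂μ) ^ 2 ≤ ∫ x, w x * g x ^ 2 ∂μ := by
  set m := ∫ x, w x * g x ∂μ
  have hvar : 0 ≤ ∫ x, w x * (g x - m) ^ 2 ∂μ :=
    integral_nonneg_of_ae (hw.mono fun x hx => mul_nonneg hx (sq_nonneg _))
  have hexpand : ∫ x, w x * (g x - m) ^ 2 ∂μ = (∫ x, w x * g x ^ 2 ∂μ) - m ^ 2 := by
    have h : (fun x => w x * (g x - m) ^ 2)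
        = fun x => w x * g x ^ 2 - 2 * m * (w x * g x) + m ^ 2 * w x := by
      ext x; ring
    rw [h, integral_add, integral_sub hwg2, integral_const_mul, integral_const_mul, hw_one]
    · ring
    exacts [hwg.const_mul _, hwg2.sub (hwg.const_mul _), hwi.const_mul _]
  linarith

noncomputable def expStieltjes (c : ℝ) (k : ℕ) : ℝ :=
  ∫ t in Ioi 0, exp (-t) / (c + t) ^ k

section expStieltjes

variable {c : ℝ}

lemma exp_neg_div_pow_le (hc : 0 < c) (k : ℕ) {t : ℝ} (ht : 0 ≤ t) :
    exp (-t) / (c + t) ^ k ≤ exp (-t) * (c ^ k)⁻¹ := by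
  rw [div_eq_mul_inv]
  gcongr
  linarith

lemma integrableOn_exp_neg_div_pow (hc : 0 < c) (k : ℕ) :
    IntegrableOn (fun t => exp (-t) / (c + t) ^ k) (Ioi 0) := by
  refine ((integrableOn_exp_neg_Ioi 0).mul_const (c ^ k)⁻¹).mono' ?_ ?_
  · refine ContinuousOn.aestronglyMeasurable ?_ measurableSet_Ioi
    exact ContinuousOn.div (by fun_prop) (by fun_prop) fun t ht =>
      pow_ne_zero k (by linarith [ht.out])
  · filter_upwards [ae_restrict_mem measurableSet_Ioi] with t ht
    have : 0 < c + t := by linarith [ht.out]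
    rw [Real.norm_of_nonneg (by positivity)]
    exact exp_neg_div_pow_le hc k ht.out.le

lemma hasDerivAt_exp_neg_div_pow {x : ℝ} (hx : c + x ≠ 0) (k : ℕ) :
    HasDerivAt (fun t => exp (-t) / (c + t) ^ k)
      (-(exp (-x) / (c + x) ^ k + k * (exp (-x) / (c + x) ^ (k + 1)))) x := by
  have h := ((hasDerivAt_neg x).exp).fun_div (((hasDerivAt_id' x).const_add c).fun_pow k)
    (pow_ne_zero k hx)
  refine h.congr_deriv ?_
  rcases k with _ | k
  · simp
  · simp only [Nat.add_sub_cancel, Nat.cast_add, Nat.cast_one]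
    field_simp
    ring

lemma expStieltjes_add_mul_succ (hc : 0 < c) (k : ℕ) :
    expStieltjes c k + k * expStieltjes c (k + 1) = (c ^ k)⁻¹ := by
  have hlim : Tendsto (fun t => exp (-t) / (c + t) ^ k) atTop (nhds 0) := by
    refine tendsto_of_tendsto_of_tendsto_of_le_of_le' tendsto_const_nhds
      (by simpa using tendsto_exp_neg_atTop_nhds_zero.mul_const (c ^ k)⁻¹) ?_ ?_
    · filter_upwards [eventually_ge_atTop 0] with t ht
      have : 0 < c + t := by linarith
      positivity
    · filter_upwards [eventually_ge_atTop 0] with t ht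
      exact exp_neg_div_pow_le hc k ht
  have h := integral_Ioi_of_hasDerivAt_of_tendsto (a := 0)
    (f := fun t => exp (-t) / (c + t) ^ k) ?_
    (fun x hx => hasDerivAt_exp_neg_div_pow (by linarith [hx.out]) k)
    (((integrableOn_exp_neg_div_pow hc k).add
      ((integrableOn_exp_neg_div_pow hc (k + 1)).const_mul k)).neg) hlim
  · rw [integral_neg, integral_add (integrableOn_exp_neg_div_pow hc k)
      ((integrableOn_exp_neg_div_pow hc (k + 1)).const_mul k), integral_const_mul] at h
    simp only [add_zero, neg_zero, exp_zero, one_div] at h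
    unfold expStieltjes
    linarith
  · refine ContinuousAt.continuousWithinAt ?_
    exact ContinuousAt.div (by fun_prop) (by fun_prop) (pow_ne_zero k (by linarith))

lemma integral_mul_exp_neg_div_pow_succ (hc : 0 < c) (k : ℕ) :
    ∫ t in Ioi 0, t * exp (-t) / (c + t) ^ (k + 1)
      = expStieltjes c k - c * expStieltjes c (k + 1) := by
  rw [expStieltjes, expStieltjes, ← integral_const_mul, ← integral_sub
    (integrableOn_exp_neg_div_pow hc k) ((integrableOn_exp_neg_div_pow hc (k + 1)).const_mul c)]
  refine setIntegral_congr_fun measurableSet_Ioi fun t ht => ?_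
  have : c + t ≠ 0 := by linarith [ht.out]
  field_simp
  ring

lemma sq_expStieltjes_one_le (hc : 0 < c) : expStieltjes c 1 ^ 2 ≤ expStieltjes c 2 := by
  have h := sq_integral_mul_le_integral_mul_sq (μ := volume.restrict (Ioi 0))
    (w := fun t => exp (-t)) (g := fun t => (c + t)⁻¹) (ae_of_all _ fun t => (exp_pos _).le)
    integral_exp_neg_Ioi_zero (integrableOn_exp_neg_Ioi 0)
    (by simpa [div_eq_mul_inv, IntegrableOn] using integrableOn_exp_neg_div_pow hc 1)
    (by simpa [div_eq_mul_inv, IntegrableOn] using integrableOn_exp_neg_div_pow hc 2)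
  simpa [expStieltjes, div_eq_mul_inv] using h

end expStieltjes

section CauchyTransform

variable {f : ℝ → ℂ} {z : ℂ}

lemma le_norm_sub_ofReal {w : ℂ} (hw : w ∈ Metric.ball z (-z.re / 2)) {t : ℝ} (ht : 0 ≤ t) :
    -z.re / 2 ≤ ‖w - t‖ := by
  have hre : |w.re - z.re| < -z.re / 2 := by
    simpa using (Complex.abs_re_le_norm (w - z)).trans_lt (by simpa [Complex.dist_eq] using hw)
  have : |(w - t).re| ≤ ‖w - t‖ := Complex.abs_re_le_norm _
  simp only [Complex.sub_re, Complex.ofReal_re] at this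
  linarith [(abs_lt.mp hre).2, neg_le_abs (w.re - t)]

lemma hasDerivAt_div_sub_pow (a : ℂ) {t : ℝ} {w : ℂ} (hw : w - t ≠ 0) (n : ℕ) :
    HasDerivAt (fun w => a / (w - t) ^ n) (-n * (a / (w - t) ^ (n + 1))) w := by
  refine ((hasDerivAt_const w a).fun_div (((hasDerivAt_id' w).sub_const (t : ℂ)).fun_pow n)
    (pow_ne_zero n hw)).congr_deriv ?_
  rcases n with _ | n
  · simp
  · simp only [Nat.add_sub_cancel, Nat.cast_add, Nat.cast_one]
    field_simp
    ring

lemma aestronglyMeasurable_div_sub_pow {μ : Measure ℝ} (hf : AEStronglyMeasurable f μ)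
    (w : ℂ) (n : ℕ) : AEStronglyMeasurable (fun t => f t / (w - t) ^ n) μ :=
  hf.mul (by fun_prop : Measurable fun t : ℝ => ((w - t) ^ n)⁻¹).aestronglyMeasurable

lemma norm_div_sub_pow_le {w : ℂ} (hw : w ∈ Metric.ball z (-z.re / 2)) (a : ℂ) {t : ℝ}
    (ht : 0 ≤ t) (n : ℕ) : ‖a / (w - t) ^ n‖ ≤ ‖a‖ * ((-z.re / 2) ^ n)⁻¹ := by
  have hr : 0 < -z.re / 2 := dist_nonneg.trans_lt hw
  rw [norm_div, norm_pow, div_eq_mul_inv]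
  gcongr
  exact le_norm_sub_ofReal hw ht

lemma integrableOn_div_sub_pow (hf : IntegrableOn f (Ioi 0)) (hz : z.re < 0) (n : ℕ) :
    IntegrableOn (fun t => f t / (z - t) ^ n) (Ioi 0) := by
  refine (hf.norm.mul_const ((-z.re / 2) ^ n)⁻¹).mono'
    (aestronglyMeasurable_div_sub_pow hf.aestronglyMeasurable z n) ?_
  filter_upwards [ae_restrict_mem measurableSet_Ioi] with t ht
  exact norm_div_sub_pow_le (Metric.mem_ball_self (by linarith)) _ ht.out.le n

lemma hasDerivAt_integral_div_sub_pow (hf : IntegrableOn f (Ioi 0)) (hz : z.re < 0) (n : ℕ) :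
    HasDerivAt (fun w => ∫ t in Ioi 0, f t / (w - t) ^ n)
      (-n * ∫ t in Ioi 0, f t / (z - t) ^ (n + 1)) z := by
  rw [← integral_const_mul]
  refine (hasDerivAt_integral_of_dominated_loc_of_deriv_le
    (F' := fun w t => -n * (f t / (w - t) ^ (n + 1)))
    (bound := fun t => n * (‖f t‖ * ((-z.re / 2) ^ (n + 1))⁻¹))
    (Metric.ball_mem_nhds z (by linarith : 0 < -z.re / 2))
    (Eventually.of_forall fun w => aestronglyMeasurable_div_sub_pow hf.aestronglyMeasurable w n)
    (integrableOn_div_sub_pow hf hz n)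
    ((aestronglyMeasurable_div_sub_pow hf.aestronglyMeasurable z (n + 1)).const_mul _)
    ?_ ((hf.norm.mul_const _).const_mul _) ?_).2
  · filter_upwards [ae_restrict_mem measurableSet_Ioi] with t ht w hw
    rw [norm_mul, norm_neg, Complex.norm_natCast]
    gcongr
    exact norm_div_sub_pow_le hw _ ht.out.le (n + 1)
  · filter_upwards [ae_restrict_mem measurableSet_Ioi] with t ht w hw
    refine hasDerivAt_div_sub_pow (f t) ?_ n
    rw [← norm_pos_iff]
    linarith [le_norm_sub_ofReal hw ht.out.le]

end CauchyTransform

section Hfun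

variable {α : ℝ} {z : ℂ}

lemma integrableOn_mul_exp_neg : IntegrableOn (fun t : ℝ => t * exp (-t)) (Ioi 0) := by
  refine (GammaIntegral_convergent two_pos).congr_fun (fun t _ => ?_) measurableSet_Ioi
  norm_num [mul_comm]

-- `Integrable.ofReal` yields the coercion `RCLike.ofReal`; restating it with `Complex.ofReal`
-- makes it match the integrand of `Hfun` up to syntactic equality, as `ring` needs below.
lemma integrableOn_ofReal_mul_exp_neg :
    IntegrableOn (fun t : ℝ => ((t * exp (-t) : ℝ) : ℂ)) (Ioi 0) :=
  integrableOn_mul_exp_neg.ofReal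

lemma hasDerivAt_Hfun (hz : z.re < 0) :
    HasDerivAt (Hfun α)
      (1 - α * ∫ t in Ioi 0, ((t * exp (-t) : ℝ) : ℂ) / (z - t) ^ 2) z := by
  have h := hasDerivAt_integral_div_sub_pow integrableOn_ofReal_mul_exp_neg hz 1
  simp only [pow_one] at h
  exact (((hasDerivAt_id' z).add_const _).add (h.const_mul _)).congr_deriv (by ring)

lemma iteratedDeriv_two_Hfun (hz : z.re < 0) :
    iteratedDeriv 2 (Hfun α) z
      = 2 * α * ∫ t in Ioi 0, ((t * exp (-t) : ℝ) : ℂ) / (z - t) ^ 3 := by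
  have hderiv : deriv (Hfun α) =ᶠ[nhds z]
      fun w => 1 - α * ∫ t in Ioi 0, ((t * exp (-t) : ℝ) : ℂ) / (w - t) ^ 2 := by
    filter_upwards [(isOpen_lt Complex.continuous_re continuous_const).mem_nhds hz]
      with w hw using (hasDerivAt_Hfun hw).deriv
  rw [iteratedDeriv_succ, iteratedDeriv_one, hderiv.deriv_eq]
  have h := hasDerivAt_integral_div_sub_pow integrableOn_ofReal_mul_exp_neg hz 2
  exact ((h.const_mul (α : ℂ)).const_sub 1).deriv.trans (by ring)

end Hfun

section AtNegReal

variable {α c : ℝ}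

lemma expStieltjes_zero (hc : 0 < c) : expStieltjes c 0 = 1 := by
  simpa using expStieltjes_add_mul_succ hc 0

lemma integral_ofReal_mul_exp_neg_div_pow_succ (hc : 0 < c) (k : ℕ) :
    ∫ t in Ioi 0, ((t * exp (-t) : ℝ) : ℂ) / (((-c : ℝ) : ℂ) - t) ^ (k + 1)
      = (((-1) ^ (k + 1) * (expStieltjes c k - c * expStieltjes c (k + 1)) : ℝ) : ℂ) := by
  rw [← integral_mul_exp_neg_div_pow_succ hc k, ← integral_const_mul, ← integral_complex_ofReal]
  refine setIntegral_congr_fun measurableSet_Ioi fun t ht => ?_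
  have : (c : ℂ) + t ≠ 0 := by norm_cast; linarith [ht.out]
  rw [show ((-c : ℝ) : ℂ) - t = (-1) * (c + t) by push_cast; ring, mul_pow]
  push_cast
  field_simp
  rw [← pow_mul, pow_mul', neg_one_sq, one_pow, mul_one]

lemma Hfun_ofReal_neg (hc : 0 < c) :
    Hfun α ((-c : ℝ) : ℂ) = ((-c + α * c * expStieltjes c 1 : ℝ) : ℂ) := by
  have h := integral_ofReal_mul_exp_neg_div_pow_succ hc 0
  simp only [zero_add, pow_one, expStieltjes_zero hc] at h
  rw [Hfun, h]
  push_cast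
  ring

lemma iteratedDeriv_two_Hfun_ofReal_neg (hc : 0 < c) :
    iteratedDeriv 2 (Hfun α) ((-c : ℝ) : ℂ)
      = ((-2 * α * (expStieltjes c 2 - c * expStieltjes c 3) : ℝ) : ℂ) := by
  rw [iteratedDeriv_two_Hfun (by simpa using hc), integral_ofReal_mul_exp_neg_div_pow_succ hc 2]
  push_cast
  ring

end AtNegReal

lemma s_formula_and_second_deriv_of_moments {α c s I₁ I₂ I₃ : ℝ} (hα : 0 < α) (hc : 0 < c)
    (h₁ : I₁ + I₂ = c⁻¹) (h₂ : I₂ + 2 * I₃ = (c ^ 2)⁻¹) (hK : I₁ - c * I₂ = 1 / α)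
    (hCS : I₁ ^ 2 ≤ I₂) (hs : s = -c + α * c * I₁) :
    s = c / (1 + c) * (α - c) ∧ -2 * α * (I₂ - c * I₃) = 1 - s / c ^ 2 ∧ 1 - s / c ^ 2 < 0 := by
  field_simp at h₁ h₂ hK
  have hαI : α * (1 + c) * I₁ = α + 1 := by linear_combination hK + α * h₁
  have hs_formula : s = c / (1 + c) * (α - c) := by
    field_simp
    linear_combination (1 + c) * hs + c * hαI
  refine ⟨hs_formula, ?_, ?_⟩
  · field_simp
    linear_combination (α * c) * h₂ + (c * (2 + c)) * hK + hs - c * hαI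
  · have key : c * (α + 1) ^ 2 + c * α * (1 + c) * (α + 1) ≤ α ^ 2 * (1 + c) ^ 2 := by
      rw [← hαI]
      linear_combination
        (α * (1 + c)) ^ 2 * (mul_le_mul_of_nonneg_left hCS hc.le) + (α * (1 + c)) ^ 2 * h₁
    have hα_gt : c ^ 2 + 2 * c < α := by nlinarith
    rw [hs_formula, sub_neg, lt_div_iff₀ (by positivity)]
    field_simp
    nlinarith

/-- `s_α = (c_α/(1+c_α))(α − c_α)` and
`H_α″(-c_α) = 1 − s_α/c_α² < 0`. -/
theorem free_gamma_s_formula_and_H_second_deriv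
    (α : ℝ) (hα : 0 < α) (c : ℝ) (hc : 0 < c)
    (hceq : (∫ t in Set.Ioi (0:ℝ), t * Real.exp (-t) / (c + t)^2) = 1/α)
    (s : ℝ) (hs : (s : ℂ) = Hfun α ((-c : ℝ) : ℂ)) :
    s = (c / (1 + c)) * (α - c) ∧
    iteratedDeriv 2 (Hfun α) ((-c : ℝ) : ℂ) = ((1 - s / c^2 : ℝ) : ℂ) ∧
    1 - s / c^2 < 0 := by
  have h₁ : expStieltjes c 1 + expStieltjes c 2 = c⁻¹ := by
    simpa using expStieltjes_add_mul_succ hc 1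
  have h₂ : expStieltjes c 2 + 2 * expStieltjes c 3 = (c ^ 2)⁻¹ := by
    simpa using expStieltjes_add_mul_succ hc 2
  have hK : expStieltjes c 1 - c * expStieltjes c 2 = 1 / α := by
    rw [← integral_mul_exp_neg_div_pow_succ hc 1, hceq]
  have hs' : s = -c + α * c * expStieltjes c 1 := by
    exact_mod_cast hs.trans (Hfun_ofReal_neg hc)
  obtain ⟨hs_formula, hH, hneg⟩ :=
    s_formula_and_second_deriv_of_moments hα hc h₁ h₂ hK (sq_expStieltjes_one_le hc) hs'
  exact ⟨hs_formula, by rw [iteratedDeriv_two_Hfun_ofReal_neg hc, hH], hneg⟩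
end
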